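/- Let N and k be positive natural numbers and let 0 ≤ δ < 0.47. Then there exist constants ρ with 0 < ρ < 1 and τ > 0, depending only on δ, such that the following holds: for every matrix A ∈ ℂ^{N×N} whose 4k-th restricted isometry constant δ_{4k} satisfies δ_{4k} ≤ δ, every x̂ ∈ ℂ^N, every β ∈ ℂ^N, and y := A x̂ + β, any sequence (x̂ⁿ)_{n≥0} of k-sparse vectors generated by the CoSaMP iteration for (A, y, k) — namely, for each n: (i) z := A* (y − A x̂ⁿ) where A* is the conjugate transpose; (ii) Ω is a set of 2k indices containing indices of 2k largest-modulus entries of z (i.e. |z_j| ≤ |z_i| for every i ∈ Ω and j ∉ Ω); (iii) R := Ω ∪ supp(x̂ⁿ); (iv) b is a vector supported on R minimizing ‖y − A b‖₂ among all vectors supported on R; (v) x̂^{n+1} is a best k-term approximation of b, obtained by keeping k largest-modulus entries of b and setting the rest to zero — satisfies, for every n ≥ 0, ‖x̂ⁿ − x̂_{h(k)}‖₂ ≤ ρⁿ·‖x̂⁰ − x̂_{h(k)}‖₂ + τ·‖A x̂_{t(k)} + β‖₂, where x̂_{h(k)} is the k-sparse vector consisting of the k largest-modulus entries of x̂ (the others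 set to zero) and x̂_{t(k)} := x̂ − x̂_{h(k)}. -/

import Mathlib

open Finset

/-- The ℓ₁ norm of a vector in ℂ^N. -/
noncomputable def l1 {N : ℕ} (v : Fin N → ℂ) : ℝ := ∑ i, ‖v i‖

/-- The Euclidean (ℓ₂) norm of a vector in ℂ^N. -/
noncomputable def l2 {N : ℕ} (v : Fin N → ℂ) : ℝ := Real.sqrt (∑ i, ‖v i‖ ^ 2)

/-- The ℓ∞ (maximum-modulus) norm of a vector in ℂ^N. -/
noncomputable def linf {N : ℕ} (v : Fin N → ℂ) : ℝ := ⨆ i, ‖v i‖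

/-- The number of nonzero entries of a vector (its "ℓ₀ norm"). -/
noncomputable def l0 {N : ℕ} (v : Fin N → ℂ) : ℕ := (Finset.univ.filter fun i => v i ≠ 0).card

/-- The best k-term approximation error in ℓ₁ norm:
    σ_k(x)₁ = inf { ‖x − z‖₁ : z is k-sparse }. -/
noncomputable def sigma1 {N : ℕ} (k : ℕ) (x : Fin N → ℂ) : ℝ :=
  sInf {t : ℝ | ∃ z : Fin N → ℂ, l0 z ≤ k ∧ t = l1 (x - z)}

/-- The support of a vector, as a finite set of indices. -/
noncomputable def vsupp {N : ℕ} (v : Fin N → ℂ) : Finset (Fin N) :=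
  Finset.univ.filter fun i => v i ≠ 0

/-!
Write `x := x̂_{h(k)}`, which is `k`-sparse, and `e := A x̂_{t(k)} + β`, so that `y = A x + e`.
The restricted isometry property of order `4k` says that `AᴴA` is the identity up to `δ` on
vectors supported on at most `4k` indices, and all vectors compared in one CoSaMP iteration are
supported on at most `4k` indices. With `R` the merged support and `b` the least-squares estimate:
* identification gives `‖x_{Rᶜ}‖ ≤ √2 (δ ‖xⁿ - x‖ + √(1 + δ) ‖e‖)`;
* orthogonality of the least-squares residual gives `‖(x - b)_R‖ ≤ δ ‖x - b‖ + √(1 + δ) ‖e‖`,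
  which together with `‖x - b‖² = ‖(x - b)_R‖² + ‖x_{Rᶜ}‖²` bounds `‖(x - b)_R‖`;
* pruning keeps a best `k`-term approximation of `b`, so it at most doubles the error on `R`.
Together these give `‖xⁿ⁺¹ - x‖ ≤ ρ ‖xⁿ - x‖ + c ‖e‖` with
`ρ = √2 δ √((1 + 3δ²) / (1 - δ²))`, and `ρ < 1` at `δ = 0.47`; iterating this recursion proves
the bound.
-/

open scoped InnerProductSpace
open WithLp Matrix

theorem le_of_sq_le_mul {a b : ℝ} (hb : 0 ≤ b) (h : a ^ 2 ≤ a * b) : a ≤ b := by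
  nlinarith

theorem sqrt_sq_add_sq_le_of_le_add {a b c r : ℝ} (ha : 0 ≤ a) (hc : 0 ≤ c) (h : a ≤ b + c) :
    √(a ^ 2 + r ^ 2) ≤ √(b ^ 2 + r ^ 2) + c := by
  have hb : b ≤ √(b ^ 2 + r ^ 2) := Real.le_sqrt_of_sq_le (by nlinarith)
  have hsq : √(b ^ 2 + r ^ 2) ^ 2 = b ^ 2 + r ^ 2 := Real.sq_sqrt (by positivity)
  refine Real.sqrt_le_iff.mpr ⟨by positivity, ?_⟩
  nlinarith [mul_le_mul_of_nonneg_left hb hc]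

theorem le_pow_mul_add_div_of_le_mul_add {a : ℕ → ℝ} {ρ c : ℝ} (hρ0 : 0 ≤ ρ) (hρ1 : ρ < 1)
    (hc : 0 ≤ c) (h : ∀ n, a (n + 1) ≤ ρ * a n + c) (n : ℕ) :
    a n ≤ ρ ^ n * a 0 + c / (1 - ρ) := by
  have h1ρ : 0 < 1 - ρ := by linarith
  induction n with
  | zero => simpa using div_nonneg hc h1ρ.le
  | succ n ih =>
    calc a (n + 1) ≤ ρ * (ρ ^ n * a 0 + c / (1 - ρ)) + c := (h n).trans (by gcongr)
      _ = ρ ^ (n + 1) * a 0 + c / (1 - ρ) := by field_simp; ring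

theorem sum_le_sum_of_forall_le_of_card_le {ι : Type*} {A B : Finset ι} {f : ι → ℝ}
    (hB : ∀ j ∈ B, 0 ≤ f j) (hAB : ∀ i ∈ A, ∀ j ∈ B, f i ≤ f j) (hcard : A.card ≤ B.card) :
    ∑ i ∈ A, f i ≤ ∑ j ∈ B, f j := by
  rcases B.eq_empty_or_nonempty with rfl | hne
  · simp [Finset.card_eq_zero.mp (Nat.le_zero.mp hcard)]
  set m := B.inf' hne f
  calc ∑ i ∈ A, f i ≤ A.card • m :=
        Finset.sum_le_card_nsmul _ _ _ fun i hi => Finset.le_inf' hne _ (hAB i hi)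
    _ ≤ B.card • m := nsmul_le_nsmul_left (Finset.le_inf' hne _ hB) hcard
    _ ≤ ∑ j ∈ B, f j := Finset.card_nsmul_le_sum _ _ _ fun j hj => Finset.inf'_le _ hj

theorem inner_eq_zero_of_forall_norm_le_norm_sub_smul {𝕜 E : Type*} [RCLike 𝕜]
    [NormedAddCommGroup E] [InnerProductSpace 𝕜 E] {r h : E}
    (hmin : ∀ t : 𝕜, ‖r‖ ≤ ‖r - t • h‖) : ⟪h, r⟫_𝕜 = 0 := by
  have hK : ‖r - 0‖ = ⨅ w : (𝕜 ∙ h), ‖r - w‖ := by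
    refine le_antisymm (le_ciInf fun w => ?_) ?_
    · obtain ⟨t, ht⟩ := Submodule.mem_span_singleton.mp w.2
      simpa [← ht] using hmin t
    · simpa using ciInf_le (f := fun w : (𝕜 ∙ h) => ‖r - w‖)
        ⟨0, by rintro _ ⟨w, rfl⟩; exact norm_nonneg _⟩ 0
  rw [inner_eq_zero_symm]
  simpa using (Submodule.norm_eq_iInf_iff_inner_eq_zero (𝕜 ∙ h) (Submodule.zero_mem _)).mp hK h
    (Submodule.mem_span_singleton_self h)

section Vectors

variable {N : ℕ}

theorem l2_eq_norm (v : Fin N → ℂ) : l2 v = ‖toLp 2 v‖ := by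
  rw [EuclideanSpace.norm_eq]; rfl

theorem l2_nonneg (v : Fin N → ℂ) : 0 ≤ l2 v := Real.sqrt_nonneg _

theorem l2_sq (v : Fin N → ℂ) : l2 v ^ 2 = ∑ i, ‖v i‖ ^ 2 := Real.sq_sqrt (by positivity)

theorem l2_neg (v : Fin N → ℂ) : l2 (-v) = l2 v := by
  rw [l2_eq_norm, l2_eq_norm, toLp_neg, norm_neg]

theorem l2_sub_comm (u v : Fin N → ℂ) : l2 (u - v) = l2 (v - u) := by
  simp only [l2_eq_norm, toLp_sub, norm_sub_rev]

theorem l2_add_le (u v : Fin N → ℂ) : l2 (u + v) ≤ l2 u + l2 v := by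
  simp only [l2_eq_norm, toLp_add, norm_add_le]

theorem l2_sub_le (u v : Fin N → ℂ) : l2 (u - v) ≤ l2 u + l2 v := by
  simp only [l2_eq_norm, toLp_sub, norm_sub_le]

theorem l2_le_l2_of_norm_le {u v : Fin N → ℂ} (h : ∀ i, ‖u i‖ ≤ ‖v i‖) : l2 u ≤ l2 v :=
  Real.sqrt_le_sqrt <| Finset.sum_le_sum fun i _ => by gcongr; exact h i

theorem l2_sq_indicator (S : Finset (Fin N)) (v : Fin N → ℂ) :
    l2 (Set.indicator ↑S v) ^ 2 = ∑ i ∈ S, ‖v i‖ ^ 2 := by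
  simp [l2_sq, Set.indicator_apply, apply_ite, Finset.sum_ite_mem]

theorem l2_sq_eq_indicator_add_compl (S : Finset (Fin N)) (v : Fin N → ℂ) :
    l2 v ^ 2 = l2 (Set.indicator ↑S v) ^ 2 + l2 (Set.indicator ↑Sᶜ v) ^ 2 := by
  rw [l2_sq, l2_sq_indicator, l2_sq_indicator, Finset.sum_add_sum_compl]

theorem l2_indicator_le (S : Set (Fin N)) (v : Fin N → ℂ) : l2 (S.indicator v) ≤ l2 v :=
  l2_le_l2_of_norm_le fun _ => norm_indicator_le_norm_self _ _

theorem l2_indicator_le_of_subset {S S' : Set (Fin N)} (h : S ⊆ S') (v : Fin N → ℂ) :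
    l2 (S.indicator v) ≤ l2 (S'.indicator v) :=
  l2_le_l2_of_norm_le fun _ => norm_indicator_le_of_subset h _ _

theorem l0_le_card {S : Finset (Fin N)} {v : Fin N → ℂ} (h : ∀ i ∉ S, v i = 0) :
    l0 v ≤ S.card :=
  Finset.card_le_card fun i hi => by_contra fun hiS => (Finset.mem_filter.mp hi).2 (h i hiS)

theorem inner_indicator_left (S : Set (Fin N)) (u v : Fin N → ℂ) :
    ⟪toLp 2 (S.indicator u), toLp 2 v⟫_ℂ = ⟪toLp 2 (S.indicator u), toLp 2 (S.indicator v)⟫_ℂ := by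
  simp only [EuclideanSpace.inner_toLp_toLp, dotProduct]
  refine Finset.sum_congr rfl fun i _ => ?_
  by_cases hi : i ∈ S <;> simp [hi]

theorem re_inner_indicator_self (S : Set (Fin N)) (v : Fin N → ℂ) :
    RCLike.re ⟪toLp 2 (S.indicator v), toLp 2 v⟫_ℂ = l2 (S.indicator v) ^ 2 := by
  rw [inner_indicator_left, inner_self_eq_norm_sq, l2_eq_norm]

theorem l2_smul (c : ℂ) (v : Fin N → ℂ) : l2 (c • v) = ‖c‖ * l2 v := by
  rw [l2_eq_norm, l2_eq_norm, toLp_smul, norm_smul]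

theorem re_inner_toLp_eq (u v : Fin N → ℂ) :
    RCLike.re ⟪toLp 2 u, toLp 2 v⟫_ℂ = (l2 (u + v) ^ 2 - l2 (u - v) ^ 2) / 4 := by
  rw [re_inner_eq_norm_add_mul_self_sub_norm_sub_mul_self_div_four, l2_eq_norm, l2_eq_norm,
    toLp_add, toLp_sub, sq, sq]

theorem l2_add_sq_add_l2_sub_sq (u v : Fin N → ℂ) :
    l2 (u + v) ^ 2 + l2 (u - v) ^ 2 = 2 * (l2 u ^ 2 + l2 v ^ 2) := by
  simp only [l2_eq_norm, toLp_add, toLp_sub]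
  exact parallelogram_law_with_norm ℂ (toLp 2 u) (toLp 2 v)

end Vectors

section Selection

variable {N : ℕ}

def SelectsLargest (S : Finset (Fin N)) (v : Fin N → ℂ) : Prop :=
  ∀ i ∈ S, ∀ j ∉ S, ‖v j‖ ≤ ‖v i‖

variable {S T : Finset (Fin N)} {v : Fin N → ℂ}

theorem SelectsLargest.sum_sdiff_le (hS : SelectsLargest S v) (h : T.card ≤ S.card) :
    ∑ i ∈ T \ S, ‖v i‖ ^ 2 ≤ ∑ i ∈ S \ T, ‖v i‖ ^ 2 :=
  sum_le_sum_of_forall_le_of_card_le (fun _ _ => by positivity)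
    (fun i hi j hj => by
      gcongr; exact hS j (Finset.mem_sdiff.mp hj).1 i (Finset.mem_sdiff.mp hi).2)
    (Finset.card_sdiff_le_card_sdiff_iff.mpr h)

theorem SelectsLargest.l2_indicator_compl_le (hS : SelectsLargest S v) (h : T.card ≤ S.card) :
    l2 (Set.indicator ↑Sᶜ v) ≤ l2 (Set.indicator ↑Tᶜ v) := by
  have hsplit : ∀ S T : Finset (Fin N), ∑ i ∈ Sᶜ, ‖v i‖ ^ 2 =
      ∑ i ∈ T \ S, ‖v i‖ ^ 2 + ∑ i ∈ (S ∪ T)ᶜ, ‖v i‖ ^ 2 := fun S T => by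
    rw [← Finset.sum_sdiff (show (S ∪ T)ᶜ ⊆ Sᶜ by simp)]
    congr 2; ext; simp; tauto
  rw [← pow_le_pow_iff_left₀ (l2_nonneg _) (l2_nonneg _) two_ne_zero, l2_sq_indicator,
    l2_sq_indicator, hsplit S T, hsplit T S, Finset.union_comm]
  gcongr 1
  exact hS.sum_sdiff_le h

theorem SelectsLargest.l2_sub_indicator_le (hS : SelectsLargest S v) (h : T.card ≤ S.card)
    {x : Fin N → ℂ} (hx : ∀ i ∉ T, x i = 0) : l2 (v - Set.indicator ↑S v) ≤ l2 (v - x) := by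
  have hx' : Set.indicator ↑Tᶜ v = Set.indicator ↑Tᶜ (v - x) := by
    ext i; by_cases hi : i ∈ T <;> simp [hi, hx]
  rw [← Set.indicator_compl, ← Finset.coe_compl]
  exact (hS.l2_indicator_compl_le h).trans (hx' ▸ l2_indicator_le _ _)

theorem SelectsLargest.l2_indicator_compl_le_sqrt_two_mul {V : Finset (Fin N)} {z : Fin N → ℂ}
    (hS : SelectsLargest S z) (hV : V.card ≤ S.card) (hv : ∀ i ∉ V, v i = 0) :
    l2 (Set.indicator ↑Sᶜ v) ≤ √2 * l2 (Set.indicator ↑(V ∪ S) (v - z)) := by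
  set a := l2 (Set.indicator ↑(V \ S) (v - z))
  set b := l2 (Set.indicator ↑(S \ V) (v - z))
  set c := l2 (Set.indicator ↑(V ∪ S) (v - z))
  have h1 : l2 (Set.indicator ↑Sᶜ v) ≤ a + l2 (Set.indicator ↑(V \ S) z) := by
    have : Set.indicator ↑Sᶜ v = Set.indicator ↑(V \ S) (v - z) + Set.indicator ↑(V \ S) z := by
      ext i; by_cases hi : i ∈ S <;> by_cases hi' : i ∈ V <;> simp [hi, hi', hv]
    exact this ▸ l2_add_le _ _
  -- `v` vanishes on `S \ V`, so there `z = -(v - z)`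
  have h2 : l2 (Set.indicator ↑(V \ S) z) ≤ b := by
    rw [← pow_le_pow_iff_left₀ (l2_nonneg _) (l2_nonneg _) two_ne_zero, l2_sq_indicator,
      l2_sq_indicator]
    refine (hS.sum_sdiff_le hV).trans_eq (Finset.sum_congr rfl fun i hi => ?_)
    simp [hv i (Finset.mem_sdiff.mp hi).2]
  have h3 : a ^ 2 + b ^ 2 ≤ c ^ 2 := by
    rw [l2_sq_indicator, l2_sq_indicator, l2_sq_indicator,
      ← Finset.sum_union disjoint_sdiff_sdiff]
    exact Finset.sum_le_sum_of_subset_of_nonneg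
      (Finset.union_subset (Finset.sdiff_subset.trans Finset.subset_union_left)
        (Finset.sdiff_subset.trans Finset.subset_union_right)) fun _ _ _ => by positivity
  calc l2 (Set.indicator ↑Sᶜ v) ≤ a + b := by linarith
    _ ≤ √(2 * c ^ 2) := Real.le_sqrt_of_sq_le (by nlinarith [sq_nonneg (a - b)])
    _ = √2 * c := by rw [Real.sqrt_mul' 2 (sq_nonneg c), Real.sqrt_sq (l2_nonneg _)]

/-- Pruning step of CoSaMP. -/
theorem SelectsLargest.l2_indicator_sub_le {R : Finset (Fin N)} {b x : Fin N → ℂ}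
    (hS : SelectsLargest S b) (hT : T.card ≤ S.card) (hb : ∀ i ∉ R, b i = 0)
    (hx : ∀ i ∉ T, x i = 0) :
    l2 (Set.indicator ↑S b - x) ≤
      √((2 * l2 (Set.indicator ↑R (x - b))) ^ 2 + l2 (Set.indicator ↑Rᶜ x) ^ 2) := by
  set p := l2 (Set.indicator ↑R (x - b))
  have hbR : Set.indicator ↑R b = b := Set.indicator_eq_self.mpr fun i hi => by
    by_contra h; exact hi (hb i h)
  have hp : l2 (Set.indicator ↑R (b - x)) = p := by
    rw [Set.indicator_sub', l2_sub_comm, ← Set.indicator_sub']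
  have hprune : l2 (Set.indicator ↑S b - b) ≤ p := by
    rw [l2_sub_comm, ← hp, Set.indicator_sub', hbR]
    exact hS.l2_sub_indicator_le hT fun i hi => by simp [Set.indicator_apply, hx i hi]
  have hin : l2 (Set.indicator ↑R (Set.indicator ↑S b - x)) ≤ 2 * p := by
    rw [show Set.indicator ↑S b - x = (Set.indicator ↑S b - b) + (b - x) by abel,
      Set.indicator_add']
    linarith [l2_add_le (Set.indicator ↑R (Set.indicator ↑S b - b)) (Set.indicator ↑R (b - x)),
      l2_indicator_le (↑R) (Set.indicator ↑S b - b)]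
  have hout : Set.indicator ↑Rᶜ (Set.indicator ↑S b - x) = -Set.indicator ↑Rᶜ x := by
    ext i; by_cases hi : i ∈ R <;> simp [Set.indicator_apply, hi, hb]
  refine Real.le_sqrt_of_sq_le ?_
  rw [l2_sq_eq_indicator_add_compl R, hout, l2_neg]
  gcongr
  exact l2_nonneg _

end Selection

section RIP

variable {M N : ℕ}

theorem inner_mulVec_left (A : Matrix (Fin M) (Fin N) ℂ) (u : Fin N → ℂ) (w : Fin M → ℂ) :
    ⟪toLp 2 (A *ᵥ u), toLp 2 w⟫_ℂ = ⟪toLp 2 u, toLp 2 (Aᴴ *ᵥ w)⟫_ℂ := by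
  simp only [EuclideanSpace.inner_toLp_toLp, star_mulVec]
  rw [dotProduct_comm, ← dotProduct_mulVec, dotProduct_comm]

/-- `IsRIP A m δ` says that the restricted isometry constant `δ_m` of `A` is at most `δ`. -/
def IsRIP (A : Matrix (Fin M) (Fin N) ℂ) (m : ℕ) (δ : ℝ) : Prop :=
  ∀ z : Fin N → ℂ, l0 z ≤ m →
    (1 - δ) * l2 z ^ 2 ≤ l2 (A *ᵥ z) ^ 2 ∧ l2 (A *ᵥ z) ^ 2 ≤ (1 + δ) * l2 z ^ 2

variable {A : Matrix (Fin M) (Fin N) ℂ} {m : ℕ} {δ : ℝ}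

theorem IsRIP.mono (hA : IsRIP A m δ) {δ' : ℝ} (h : δ ≤ δ') : IsRIP A m δ' := fun z hz =>
  ⟨by nlinarith [(hA z hz).1, sq_nonneg (l2 z)], by nlinarith [(hA z hz).2, sq_nonneg (l2 z)]⟩

theorem IsRIP.l2_mulVec_le (hA : IsRIP A m δ) {z : Fin N → ℂ} (hz : l0 z ≤ m) :
    l2 (A *ᵥ z) ≤ √(1 + δ) * l2 z :=
  calc l2 (A *ᵥ z) = √(l2 (A *ᵥ z) ^ 2) := (Real.sqrt_sq (l2_nonneg _)).symm
    _ ≤ √((1 + δ) * l2 z ^ 2) := Real.sqrt_le_sqrt (hA z hz).2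
    _ = √(1 + δ) * l2 z := by rw [Real.sqrt_mul' _ (sq_nonneg _), Real.sqrt_sq (l2_nonneg _)]

theorem IsRIP.re_inner_sub_le (hA : IsRIP A m δ) {U : Finset (Fin N)} (hU : U.card ≤ m)
    {u v : Fin N → ℂ} (hu : ∀ i ∉ U, u i = 0) (hv : ∀ i ∉ U, v i = 0) :
    RCLike.re (⟪toLp 2 u, toLp 2 v⟫_ℂ - ⟪toLp 2 (A *ᵥ u), toLp 2 (A *ᵥ v)⟫_ℂ) ≤
      δ * l2 u * l2 v := by
  have hpolar : ∀ u v : Fin N → ℂ, (∀ i ∉ U, u i = 0) → (∀ i ∉ U, v i = 0) →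
      RCLike.re (⟪toLp 2 u, toLp 2 v⟫_ℂ - ⟪toLp 2 (A *ᵥ u), toLp 2 (A *ᵥ v)⟫_ℂ) ≤
        δ / 2 * (l2 u ^ 2 + l2 v ^ 2) := by
    intro u v hu hv
    have hadd := hA (u + v) ((l0_le_card fun i hi => by simp [hu i hi, hv i hi]).trans hU) |>.1
    have hsub := hA (u - v) ((l0_le_card fun i hi => by simp [hu i hi, hv i hi]).trans hU) |>.2
    rw [map_sub, re_inner_toLp_eq, re_inner_toLp_eq, ← mulVec_add, ← mulVec_sub]
    linarith [congrArg (δ * ·) (l2_add_sq_add_l2_sub_sq u v)]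
  rcases eq_or_ne u 0 with rfl | hu0
  · simp [l2_eq_norm]
  rcases eq_or_ne v 0 with rfl | hv0
  · simp [l2_eq_norm]
  have ha : 0 < l2 u := by rw [l2_eq_norm]; simpa using hu0
  have hb : 0 < l2 v := by rw [l2_eq_norm]; simpa using hv0
  have h := hpolar (((l2 u)⁻¹ : ℝ) • u) (((l2 v)⁻¹ : ℝ) • v)
    (fun i hi => by simp [hu i hi]) (fun i hi => by simp [hv i hi])
  simp only [toLp_smul, mulVec_smul, RCLike.real_smul_eq_coe_smul (K := ℂ), inner_smul_left,
    inner_smul_right, ← mul_sub, RCLike.conj_ofReal, RCLike.re_ofReal_mul, l2_smul,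
    RCLike.norm_ofReal, abs_inv, abs_of_pos ha, abs_of_pos hb,
    inv_mul_cancel₀ ha.ne', inv_mul_cancel₀ hb.ne'] at h
  rw [← mul_assoc, ← mul_inv, inv_mul_le_iff₀ (by positivity)] at h
  linarith

theorem IsRIP.l2_indicator_conjTranspose_mulVec_le (hA : IsRIP A m δ) {S : Finset (Fin N)}
    (hS : S.card ≤ m) (e : Fin M → ℂ) :
    l2 (Set.indicator ↑S (Aᴴ *ᵥ e)) ≤ √(1 + δ) * l2 e := by
  set g := Set.indicator ↑S (Aᴴ *ᵥ e)
  have hg : l0 g ≤ m := (l0_le_card fun i hi => Set.indicator_of_notMem (by simpa) _).trans hS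
  refine le_of_sq_le_mul (mul_nonneg (Real.sqrt_nonneg _) (l2_nonneg e)) ?_
  calc l2 g ^ 2 = RCLike.re ⟪toLp 2 (A *ᵥ g), toLp 2 e⟫_ℂ := by
        rw [inner_mulVec_left, re_inner_indicator_self]
    _ ≤ l2 (A *ᵥ g) * l2 e := by rw [l2_eq_norm, l2_eq_norm]; exact re_inner_le_norm _ _
    _ ≤ √(1 + δ) * l2 g * l2 e := mul_le_mul_of_nonneg_right (hA.l2_mulVec_le hg) (l2_nonneg e)
    _ = l2 g * (√(1 + δ) * l2 e) := by ring

theorem IsRIP.l2_indicator_sub_conjTranspose_mulVec_mulVec_le (hA : IsRIP A m δ) (hδ : 0 ≤ δ)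
    {U : Finset (Fin N)} (hU : U.card ≤ m) {v : Fin N → ℂ} (hv : ∀ i ∉ U, v i = 0) :
    l2 (Set.indicator ↑U (v - Aᴴ *ᵥ (A *ᵥ v))) ≤ δ * l2 v := by
  set g := Set.indicator ↑U (v - Aᴴ *ᵥ (A *ᵥ v))
  refine le_of_sq_le_mul (mul_nonneg hδ (l2_nonneg v)) ?_
  calc l2 g ^ 2 = RCLike.re (⟪toLp 2 g, toLp 2 v⟫_ℂ - ⟪toLp 2 (A *ᵥ g), toLp 2 (A *ᵥ v)⟫_ℂ) := by
        rw [← re_inner_indicator_self, toLp_sub, inner_sub_right, inner_mulVec_left]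
    _ ≤ δ * l2 g * l2 v :=
        hA.re_inner_sub_le hU (fun i hi => Set.indicator_of_notMem (by simpa) _) hv
    _ = l2 g * (δ * l2 v) := by ring

theorem IsRIP.l2_indicator_sub_conjTranspose_mulVec_add_le (hA : IsRIP A m δ) (hδ : 0 ≤ δ)
    {U : Finset (Fin N)} (hU : U.card ≤ m) {v : Fin N → ℂ} (hv : ∀ i ∉ U, v i = 0)
    (e : Fin M → ℂ) :
    l2 (Set.indicator ↑U (v - Aᴴ *ᵥ (A *ᵥ v + e))) ≤ δ * l2 v + √(1 + δ) * l2 e := by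
  rw [mulVec_add, ← sub_sub, Set.indicator_sub']
  exact (l2_sub_le _ _).trans <| add_le_add
    (hA.l2_indicator_sub_conjTranspose_mulVec_mulVec_le hδ hU hv)
    (hA.l2_indicator_conjTranspose_mulVec_le hU e)

/-- Identification step of CoSaMP. -/
theorem IsRIP.l2_indicator_compl_le_of_selectsLargest (hA : IsRIP A m δ) (hδ : 0 ≤ δ)
    {V Ω : Finset (Fin N)} (hVΩ : V.card ≤ Ω.card) (hm : (V ∪ Ω).card ≤ m)
    {v : Fin N → ℂ} (hv : ∀ i ∉ V, v i = 0) {e : Fin M → ℂ}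
    (hΩ : SelectsLargest Ω (Aᴴ *ᵥ (A *ᵥ v + e))) :
    l2 (Set.indicator ↑Ωᶜ v) ≤ √2 * (δ * l2 v + √(1 + δ) * l2 e) :=
  (hΩ.l2_indicator_compl_le_sqrt_two_mul hVΩ hv).trans <| by
    gcongr
    exact hA.l2_indicator_sub_conjTranspose_mulVec_add_le hδ hm
      (fun i hi => hv i fun h => hi (Finset.mem_union_left _ h)) e

end RIP

noncomputable def cosampRate (d : ℝ) : ℝ := √2 * d * √((1 + 3 * d ^ 2) / (1 - d ^ 2))

noncomputable def cosampNoiseGain (d : ℝ) : ℝ :=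
  √(1 + d) * (√2 * √((1 + 3 * d ^ 2) / (1 - d ^ 2)) + 2 / (1 - d))

theorem le_div_sqrt_add_of_le_mul_sqrt_add {d p r ε : ℝ} (hd0 : 0 ≤ d) (hd1 : d < 1)
    (hp : 0 ≤ p) (hr : 0 ≤ r) (hε : 0 ≤ ε) (h : p ≤ d * √(p ^ 2 + r ^ 2) + ε) :
    p ≤ d * r / √(1 - d ^ 2) + ε / (1 - d) := by
  set p₀ := d * r / √(1 - d ^ 2)
  have hd2 : 1 - d ^ 2 ≠ 0 := by nlinarith
  have hs : √(1 - d ^ 2) ^ 2 = 1 - d ^ 2 := Real.sq_sqrt (by nlinarith)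
  have hs0 : 0 < √(1 - d ^ 2) := Real.sqrt_pos.mpr (by nlinarith)
  -- `p₀` is the fixed point of the `d`-Lipschitz map `t ↦ d √(t² + r²)`
  have hfix : d * √(p₀ ^ 2 + r ^ 2) = p₀ := by
    have : p₀ ^ 2 + r ^ 2 = (r / √(1 - d ^ 2)) ^ 2 := by
      simp only [p₀, div_pow, mul_pow, hs]; field_simp; ring
    rw [this, Real.sqrt_sq (by positivity), ← mul_div_assoc]
  have hlip : √(p ^ 2 + r ^ 2) ≤ √(p₀ ^ 2 + r ^ 2) + max (p - p₀) 0 :=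
    sqrt_sq_add_sq_le_of_le_add hp (le_max_right _ _) (by linarith [le_max_left (p - p₀) 0])
  have h1d : 0 < 1 - d := by linarith
  rcases le_total p p₀ with hle | hle
  · linarith [div_nonneg hε h1d.le]
  · rw [max_eq_left (by linarith)] at hlip
    have : (p - p₀) * (1 - d) ≤ ε := by nlinarith
    linarith [(le_div_iff₀ h1d).mpr this]

theorem le_cosampRate_mul_add {d p r ε lv E : ℝ} (hd0 : 0 ≤ d) (hd1 : d < 1)
    (hp : 0 ≤ p) (hr : 0 ≤ r) (hε : 0 ≤ ε)
    (hest : p ≤ d * √(p ^ 2 + r ^ 2) + √(1 + d) * ε) (hident : r ≤ √2 * (d * lv + √(1 + d) * ε))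
    (hE : E ≤ √((2 * p) ^ 2 + r ^ 2)) :
    E ≤ cosampRate d * lv + cosampNoiseGain d * ε := by
  set Q := √((1 + 3 * d ^ 2) / (1 - d ^ 2))
  set η := √(1 + d) * ε
  have h1d : 0 < 1 - d := by linarith
  have hd2 : 1 - d ^ 2 ≠ 0 := by nlinarith
  have hs : √(1 - d ^ 2) ^ 2 = 1 - d ^ 2 := Real.sq_sqrt (by nlinarith)
  have hp' := le_div_sqrt_add_of_le_mul_sqrt_add hd0 hd1 hp hr (by positivity) hest
  have hQ : √((2 * (d * r / √(1 - d ^ 2))) ^ 2 + r ^ 2) = r * Q := by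
    rw [show (2 * (d * r / √(1 - d ^ 2))) ^ 2 + r ^ 2 = r ^ 2 * ((1 + 3 * d ^ 2) / (1 - d ^ 2)) by
      rw [mul_pow, div_pow, mul_pow, hs]; field_simp; ring,
      Real.sqrt_mul (sq_nonneg r), Real.sqrt_sq hr]
  calc E ≤ √((2 * p) ^ 2 + r ^ 2) := hE
    _ ≤ √((2 * (d * r / √(1 - d ^ 2))) ^ 2 + r ^ 2) + 2 * (η / (1 - d)) :=
      sqrt_sq_add_sq_le_of_le_add (by positivity) (by positivity) (by linarith)
    _ = r * Q + 2 * (η / (1 - d)) := by rw [hQ]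
    _ ≤ √2 * (d * lv + η) * Q + 2 * (η / (1 - d)) := by gcongr
    _ = cosampRate d * lv + cosampNoiseGain d * ε := by
      simp only [cosampRate, cosampNoiseGain, η, Q]; ring

theorem cosampRate_pos : 0 < cosampRate 0.47 := by
  unfold cosampRate; have : (0 : ℝ) < (1 + 3 * 0.47 ^ 2) / (1 - 0.47 ^ 2) := by norm_num
  positivity

theorem cosampRate_lt_one : cosampRate 0.47 < 1 := by
  have h : cosampRate 0.47 ^ 2 < 1 := by
    rw [cosampRate, mul_pow, mul_pow, Real.sq_sqrt, Real.sq_sqrt] <;> norm_num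
  exact (pow_lt_one_iff_of_nonneg cosampRate_pos.le two_ne_zero).mp h

theorem cosampNoiseGain_pos : 0 < cosampNoiseGain 0.47 := by
  unfold cosampNoiseGain; have : (0 : ℝ) < 2 / (1 - 0.47) := by norm_num
  positivity

section CoSaMP

variable {M N : ℕ} {A : Matrix (Fin M) (Fin N) ℂ}

theorem inner_mulVec_residual_eq_zero {R : Finset (Fin N)} {y : Fin M → ℂ} {b h : Fin N → ℂ}
    (hb : ∀ i ∉ R, b i = 0)
    (hmin : ∀ c : Fin N → ℂ, (∀ i ∉ R, c i = 0) → l2 (y - A *ᵥ b) ≤ l2 (y - A *ᵥ c))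
    (hh : ∀ i ∉ R, h i = 0) :
    ⟪toLp 2 (A *ᵥ h), toLp 2 (y - A *ᵥ b)⟫_ℂ = 0 :=
  inner_eq_zero_of_forall_norm_le_norm_sub_smul fun t => by
    have := hmin (b + t • h) fun i hi => by simp [hb i hi, hh i hi]
    simpa only [l2_eq_norm, mulVec_add, mulVec_smul, ← sub_sub, toLp_sub, toLp_smul] using this

/-- Estimation step of CoSaMP. -/
theorem IsRIP.l2_indicator_sub_le_of_leastSquares {m : ℕ} {δ : ℝ} (hA : IsRIP A m δ)
    (hδ : 0 ≤ δ) {T R : Finset (Fin N)} (hm : (T ∪ R).card ≤ m) {x b : Fin N → ℂ}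
    {e : Fin M → ℂ} (hx : ∀ i ∉ T, x i = 0) (hb : ∀ i ∉ R, b i = 0)
    (hmin : ∀ c : Fin N → ℂ, (∀ i ∉ R, c i = 0) →
      l2 (A *ᵥ x + e - A *ᵥ b) ≤ l2 (A *ᵥ x + e - A *ᵥ c)) :
    l2 (Set.indicator ↑R (x - b)) ≤ δ * l2 (x - b) + √(1 + δ) * l2 e := by
  set g := Set.indicator ↑R (x - b)
  have hg : ∀ i ∉ R, g i = 0 := fun i hi => Set.indicator_of_notMem (by simpa) _
  have hgTR : ∀ i ∉ T ∪ R, g i = 0 := fun i hi => hg i fun h => hi (Finset.mem_union_right _ h)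
  have hxbTR : ∀ i ∉ T ∪ R, (x - b) i = 0 := fun i hi => by
    simp [hx i fun h => hi (Finset.mem_union_left _ h),
      hb i fun h => hi (Finset.mem_union_right _ h)]
  -- the least-squares residual `A x + e - A b` is orthogonal to `A g`
  have hAg : ⟪toLp 2 (A *ᵥ g), toLp 2 (A *ᵥ (x - b))⟫_ℂ = -⟪toLp 2 (A *ᵥ g), toLp 2 e⟫_ℂ := by
    rw [show A *ᵥ (x - b) = A *ᵥ x + e - A *ᵥ b - e by rw [mulVec_sub]; abel, toLp_sub,
      inner_sub_right, inner_mulVec_residual_eq_zero hb hmin hg, zero_sub]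
  have hcross : -RCLike.re ⟪toLp 2 (A *ᵥ g), toLp 2 e⟫_ℂ ≤ √(1 + δ) * l2 g * l2 e :=
    calc _ ≤ ‖⟪toLp 2 (A *ᵥ g), toLp 2 e⟫_ℂ‖ := (neg_le_abs _).trans (RCLike.abs_re_le_norm _)
      _ ≤ l2 (A *ᵥ g) * l2 e := by rw [l2_eq_norm, l2_eq_norm]; exact norm_inner_le_norm _ _
      _ ≤ √(1 + δ) * l2 g * l2 e := mul_le_mul_of_nonneg_right
          (hA.l2_mulVec_le ((l0_le_card hgTR).trans hm)) (l2_nonneg e)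
  refine le_of_sq_le_mul (add_nonneg (mul_nonneg hδ (l2_nonneg _))
    (mul_nonneg (Real.sqrt_nonneg _) (l2_nonneg e))) ?_
  calc l2 g ^ 2 = RCLike.re (⟪toLp 2 g, toLp 2 (x - b)⟫_ℂ -
        ⟪toLp 2 (A *ᵥ g), toLp 2 (A *ᵥ (x - b))⟫_ℂ) - RCLike.re ⟪toLp 2 (A *ᵥ g), toLp 2 e⟫_ℂ := by
        rw [← re_inner_indicator_self, hAg, sub_neg_eq_add, map_add]; ring
    _ ≤ δ * l2 g * l2 (x - b) + √(1 + δ) * l2 g * l2 e :=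
        add_le_add (hA.re_inner_sub_le hm hgTR hxbTR) hcross
    _ = l2 g * (δ * l2 (x - b) + √(1 + δ) * l2 e) := by ring

def IsCoSaMPStep (A : Matrix (Fin M) (Fin N) ℂ) (y : Fin M → ℂ) (k : ℕ) (xn xnext : Fin N → ℂ) :
    Prop :=
  ∃ (Ω : Finset (Fin N)) (b : Fin N → ℂ),
    Ω.card = 2 * k ∧ SelectsLargest Ω (Aᴴ *ᵥ (y - A *ᵥ xn)) ∧
    (∀ i ∉ Ω ∪ vsupp xn, b i = 0) ∧
    (∀ c : Fin N → ℂ, (∀ i ∉ Ω ∪ vsupp xn, c i = 0) → l2 (y - A *ᵥ b) ≤ l2 (y - A *ᵥ c)) ∧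
    ∃ S : Finset (Fin N), S.card = k ∧ SelectsLargest S b ∧
      xnext = fun i => if i ∈ S then b i else 0

theorem IsCoSaMPStep.l2_sub_le {y : Fin M → ℂ} {k : ℕ} {xn xnext : Fin N → ℂ}
    (hstep : IsCoSaMPStep A y k xn xnext) {d : ℝ} (hA : IsRIP A (4 * k) d) (hd0 : 0 ≤ d)
    (hd1 : d < 1) {x : Fin N → ℂ} {e : Fin M → ℂ} (hy : y = A *ᵥ x + e) {T : Finset (Fin N)}
    (hT : T.card ≤ k) (hx : ∀ i ∉ T, x i = 0) (hxn : l0 xn ≤ k) :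
    l2 (xnext - x) ≤ cosampRate d * l2 (xn - x) + cosampNoiseGain d * l2 e := by
  obtain ⟨Ω, b, hΩ, hΩsel, hb, hbmin, S, hS, hSsel, rfl⟩ := hstep
  subst hy
  have hxn : (vsupp xn).card ≤ k := hxn
  have hxn_supp : ∀ i ∉ vsupp xn, xn i = 0 := by simp [vsupp]
  have hV : (T ∪ vsupp xn).card ≤ 2 * k := by
    have := Finset.card_union_le T (vsupp xn); omega
  have hVΩ : (T ∪ vsupp xn ∪ Ω).card ≤ 4 * k := by
    have := Finset.card_union_le (T ∪ vsupp xn) Ω; omega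
  have hTR : (T ∪ (Ω ∪ vsupp xn)).card ≤ 4 * k := by
    rw [← Finset.union_assoc, Finset.union_right_comm]; exact hVΩ
  set R := Ω ∪ vsupp xn
  have hident : l2 (Set.indicator ↑Rᶜ x) ≤ √2 * (d * l2 (xn - x) + √(1 + d) * l2 e) := by
    have hsel : SelectsLargest Ω (Aᴴ *ᵥ (A *ᵥ (x - xn) + e)) := by
      rwa [mulVec_sub, show A *ᵥ x - A *ᵥ xn + e = A *ᵥ x + e - A *ᵥ xn by abel]
    have hxR : Set.indicator ↑Rᶜ x = Set.indicator ↑Rᶜ (x - xn) := by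
      ext i; by_cases hi : i ∈ vsupp xn <;> simp_all [R, Set.indicator_apply]
    rw [hxR, l2_sub_comm xn]
    refine (l2_indicator_le_of_subset (by simp [R]) _).trans
      (hA.l2_indicator_compl_le_of_selectsLargest hd0 (V := T ∪ vsupp xn) (by omega) hVΩ ?_ hsel)
    intro i hi
    simp only [Finset.mem_union, not_or] at hi
    simp [hx i hi.1, hxn_supp i hi.2]
  have hest := hA.l2_indicator_sub_le_of_leastSquares hd0 hTR hx hb hbmin
  have hpyth :
      l2 (x - b) = √(l2 (Set.indicator ↑R (x - b)) ^ 2 + l2 (Set.indicator ↑Rᶜ x) ^ 2) := by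
    have : Set.indicator ↑Rᶜ x = Set.indicator ↑Rᶜ (x - b) := by
      ext i; by_cases hi : i ∈ R <;> simp_all
    rw [this, ← l2_sq_eq_indicator_add_compl, Real.sqrt_sq (l2_nonneg _)]
  have hnext : (fun i => if i ∈ S then b i else 0) = Set.indicator ↑S b := by
    ext i; simp [Set.indicator_apply]
  rw [hnext]
  exact le_cosampRate_mul_add hd0 hd1 (l2_nonneg _) (l2_nonneg _) (l2_nonneg _) (hpyth ▸ hest)
    hident (hSsel.l2_indicator_sub_le (by omega) hb hx)

end CoSaMP

theorem cosamp_bound_general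
    (N k : ℕ) (δ : ℝ) (hδ : δ < 0.47) :
    ∃ ρ τ : ℝ, 0 < ρ ∧ ρ < 1 ∧ 0 < τ ∧
      ∀ (A : Matrix (Fin N) (Fin N) ℂ),
        -- δ_{4k}(A) ≤ δ, i.e. A satisfies the RIP of order 4k with constant δ
        (∀ z : Fin N → ℂ, l0 z ≤ 4 * k →
          (1 - δ) * l2 z ^ 2 ≤ l2 (A.mulVec z) ^ 2 ∧
            l2 (A.mulVec z) ^ 2 ≤ (1 + δ) * l2 z ^ 2) →
        ∀ (xhat β y : Fin N → ℂ), y = A.mulVec xhat + β →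
          ∀ xseq : ℕ → Fin N → ℂ,
            -- each iterate is k-sparse
            (∀ n, l0 (xseq n) ≤ k) →
            -- each iterate is produced from the previous one by the CoSaMP steps
            (∀ n, ∃ (Ω : Finset (Fin N)) (b : Fin N → ℂ),
              -- (i)–(ii) identification: Ω consists of 2k indices of largest-modulus
              -- entries of the signal proxy z = A*(y − A xhatⁿ)
              Ω.card = 2 * k ∧
              (∀ i ∈ Ω, ∀ j ∉ Ω,
                ‖A.conjTranspose.mulVec (y - A.mulVec (xseq n)) j‖ ≤
                  ‖A.conjTranspose.mulVec (y - A.mulVec (xseq n)) i‖) ∧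
              -- (iii)–(iv) support merger and least-squares estimation on R = Ω ∪ supp(xhatⁿ)
              (∀ i ∉ Ω ∪ vsupp (xseq n), b i = 0) ∧
              (∀ c : Fin N → ℂ, (∀ i ∉ Ω ∪ vsupp (xseq n), c i = 0) →
                l2 (y - A.mulVec b) ≤ l2 (y - A.mulVec c)) ∧
              -- (v) pruning: xhat^{n+1} keeps the k largest-modulus entries of b
              (∃ S : Finset (Fin N), S.card = k ∧
                (∀ i ∈ S, ∀ j ∉ S, ‖b j‖ ≤ ‖b i‖) ∧
                xseq (n + 1) = fun i => if i ∈ S then b i else 0)) →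
            -- xhat_{h(k)}: a k-sparse vector keeping the k largest-modulus entries of xhat
            ∀ T : Finset (Fin N), T.card = k →
              (∀ i ∈ T, ∀ j ∉ T, ‖xhat j‖ ≤ ‖xhat i‖) →
              ∀ xh : Fin N → ℂ, xh = (fun i => if i ∈ T then xhat i else 0) →
                ∀ n : ℕ,
                  l2 (xseq n - xh) ≤
                    ρ ^ n * l2 (xseq 0 - xh) + τ * l2 (A.mulVec (xhat - xh) + β) := by
  refine ⟨cosampRate 0.47, cosampNoiseGain 0.47 / (1 - cosampRate 0.47), cosampRate_pos,
    cosampRate_lt_one, div_pos cosampNoiseGain_pos (by linarith [cosampRate_lt_one]), ?_⟩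
  intro A hA xhat β y hy xseq hsparse hstep T hT _ xh hxh n
  have hxh : ∀ i ∉ T, xh i = 0 := fun i hi => by simp [hxh, hi]
  have hy : y = A *ᵥ xh + (A *ᵥ (xhat - xh) + β) := by rw [hy, mulVec_sub]; abel
  have hrec := le_pow_mul_add_div_of_le_mul_add (a := fun n => l2 (xseq n - xh))
    cosampRate_pos.le cosampRate_lt_one (mul_nonneg cosampNoiseGain_pos.le (l2_nonneg _))
    (fun n => IsCoSaMPStep.l2_sub_le (hstep n) (IsRIP.mono hA hδ.le) (by norm_num) (by norm_num)
      hy hT.le hxh (hsparse n)) n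
  rwa [mul_div_right_comm] at hrec

/-- Performance guarantee of CoSaMP: if the 4k-th restricted isometry constant
of A is at most δ < 0.47, then there are constants 0 < ρ < 1 and τ > 0,
depending only on δ, such that every sequence of k-sparse iterates produced by
the CoSaMP iteration for (A, y, k) with y = A xhat + β satisfies
‖xhatⁿ − xhat_{h(k)}‖₂ ≤ ρⁿ ‖xhat⁰ − xhat_{h(k)}‖₂ + τ ‖A xhat_{t(k)} + β‖₂ for all n. -/
theorem cosamp_bound
    (N k : ℕ) (hN : 0 < N) (hk : 0 < k) (δ : ℝ) (hδ0 : 0 ≤ δ) (hδ : δ < 0.47) :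
    ∃ ρ τ : ℝ, 0 < ρ ∧ ρ < 1 ∧ 0 < τ ∧
      ∀ (A : Matrix (Fin N) (Fin N) ℂ),
        -- δ_{4k}(A) ≤ δ, i.e. A satisfies the RIP of order 4k with constant δ
        (∀ z : Fin N → ℂ, l0 z ≤ 4 * k →
          (1 - δ) * l2 z ^ 2 ≤ l2 (A.mulVec z) ^ 2 ∧
            l2 (A.mulVec z) ^ 2 ≤ (1 + δ) * l2 z ^ 2) →
        ∀ (xhat β y : Fin N → ℂ), y = A.mulVec xhat + β →
          ∀ xseq : ℕ → Fin N → ℂ,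
            -- each iterate is k-sparse
            (∀ n, l0 (xseq n) ≤ k) →
            -- each iterate is produced from the previous one by the CoSaMP steps
            (∀ n, ∃ (Ω : Finset (Fin N)) (b : Fin N → ℂ),
              -- (i)–(ii) identification: Ω consists of 2k indices of largest-modulus
              -- entries of the signal proxy z = A*(y − A xhatⁿ)
              Ω.card = 2 * k ∧
              (∀ i ∈ Ω, ∀ j ∉ Ω,
                ‖A.conjTranspose.mulVec (y - A.mulVec (xseq n)) j‖ ≤
                  ‖A.conjTranspose.mulVec (y - A.mulVec (xseq n)) i‖) ∧
              -- (iii)–(iv) support merger and least-squares estimation on R = Ω ∪ supp(xhatⁿ)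
              (∀ i ∉ Ω ∪ vsupp (xseq n), b i = 0) ∧
              (∀ c : Fin N → ℂ, (∀ i ∉ Ω ∪ vsupp (xseq n), c i = 0) →
                l2 (y - A.mulVec b) ≤ l2 (y - A.mulVec c)) ∧
              -- (v) pruning: xhat^{n+1} keeps the k largest-modulus entries of b
              (∃ S : Finset (Fin N), S.card = k ∧
                (∀ i ∈ S, ∀ j ∉ S, ‖b j‖ ≤ ‖b i‖) ∧
                xseq (n + 1) = fun i => if i ∈ S then b i else 0)) →
            -- xhat_{h(k)}: a k-sparse vector keeping the k largest-modulus entries of xhat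
            ∀ T : Finset (Fin N), T.card = k →
              (∀ i ∈ T, ∀ j ∉ T, ‖xhat j‖ ≤ ‖xhat i‖) →
              ∀ xh : Fin N → ℂ, xh = (fun i => if i ∈ T then xhat i else 0) →
                ∀ n : ℕ,
                  l2 (xseq n - xh) ≤
                    ρ ^ n * l2 (xseq 0 - xh) + τ * l2 (A.mulVec (xhat - xh) + β) :=
  cosamp_bound_general N k δ hδ
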